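/- Let (X,r) be a nondegenerate involutive braided set of finite order, let G = G(X,r), and let K be a field. Then the group algebra K[G] is a left Noetherian and right Noetherian ring. -/

import Mathlib

/-- The left action `σ_x(y)`: first component of `r (x, y)`. -/
def sig {X : Type*} (r : X × X → X × X) (x y : X) : X := (r (x, y)).1

/-- The right action `τ_y(x)`: second component of `r (x, y)`. -/
def tau {X : Type*} (r : X × X → X × X) (y x : X) : X := (r (x, y)).2

/-- `r¹² = r × id`. -/
def r12 {X : Type*} (r : X × X → X × X) : X × X × X → X × X × X :=
  fun t => ((r (t.1, t.2.1)).1, (r (t.1, t.2.1)).2, t.2.2)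

/-- `r²³ = id × r`. -/
def r23 {X : Type*} (r : X × X → X × X) : X × X × X → X × X × X :=
  fun t => (t.1, (r (t.2.1, t.2.2)).1, (r (t.2.1, t.2.2)).2)

/-- The braid relation `r¹² ∘ r²³ ∘ r¹² = r²³ ∘ r¹² ∘ r²³`. -/
def IsBraided {X : Type*} (r : X × X → X × X) : Prop :=
  r12 r ∘ r23 r ∘ r12 r = r23 r ∘ r12 r ∘ r23 r

/-- Nondegeneracy: every `σ_x` and every `τ_y` is bijective. -/
def Nondegenerate {X : Type*} (r : X × X → X × X) : Prop :=
  (∀ x, Function.Bijective (sig r x)) ∧ (∀ y, Function.Bijective (tau r y))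

/-- The defining relators of the group `G(X,r)`:
`x · y · (σ_x(y) · τ_y(x))⁻¹` for all `x, y ∈ X`. -/
def ybRels {X : Type*} (r : X × X → X × X) : Set (FreeGroup X) :=
  { w | ∃ x y : X, w = FreeGroup.of x * FreeGroup.of y *
      (FreeGroup.of (sig r x y) * FreeGroup.of (tau r y x))⁻¹ }

/-- The group `G(X,r)` associated with `(X,r)`, presented by generators `X`
and relations `x y = σ_x(y) τ_y(x)`. -/
abbrev YBGroup {X : Type*} (r : X × X → X × X) := PresentedGroup (ybRels r)

/-- The canonical map `ι : X → G(X,r)`. -/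
def ybι {X : Type*} (r : X × X → X × X) : X → YBGroup r := PresentedGroup.of

/-!
`G = G(X,r)` acts on `ℤ^X` by affine maps, the generator `x` acting by `a ↦ e_x + σ_x a`; the
relations hold because `r` is involutive and braided. This action is faithful: by the Ore
condition every element is a fraction `w v⁻¹` of positive words, and the image of `0` under a
positive word is the multiset `{x₁, σ_{x₁}(x₂), …}`, from which the word is recovered up to the
defining relations by pulling letters to the front. So the elements acting by translations, the
kernel of `G → Sym(X)`, form an abelian subgroup of finite index, finitely generated as `G` is.
Its group algebra is Noetherian by Hilbert's basis theorem, `K[G]` is a finite module over it,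
and right Noetherianity follows from `K[G]ᵐᵒᵖ ≃ Kᵐᵒᵖ[G]`.
-/

namespace MonoidAlgebra

variable {k G : Type*} [Group G]

theorem isNoetherianRing_of_finiteIndex [Ring k] (H : Subgroup G) [H.FiniteIndex]
    [IsNoetherianRing (MonoidAlgebra k H)] : IsNoetherianRing (MonoidAlgebra k G) := by
  classical
  let f : MonoidAlgebra k H →+* MonoidAlgebra k G := mapDomainRingHom k H.subtype
  let _ : Module (MonoidAlgebra k H) (MonoidAlgebra k G) := f.toModule
  have smul_def (a : MonoidAlgebra k H) (s : MonoidAlgebra k G) : a • s = f a * s := rfl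
  have : IsScalarTower (MonoidAlgebra k H) (MonoidAlgebra k G) (MonoidAlgebra k G) :=
    ⟨fun a s t => by simp only [smul_eq_mul, smul_def, mul_assoc]⟩
  let reps : Set (MonoidAlgebra k G) := Set.range fun γ : G ⧸ H => of k G γ.out⁻¹
  have hspan : Submodule.span (MonoidAlgebra k H) reps = ⊤ := by
    refine Submodule.eq_top_iff'.2 fun s => ?_
    induction s using MonoidAlgebra.induction with
    | zero => exact zero_mem _
    | single_add g c s _ _ ih =>
      refine add_mem ?_ ih
      -- `g` lies in the coset `H γ⁻¹` for `γ` the representative of `g⁻¹ H`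
      set γ := (QuotientGroup.mk g⁻¹ : G ⧸ H).out
      have hγ : g * γ ∈ H := by
        simpa using QuotientGroup.eq.1 (QuotientGroup.out_eq' (QuotientGroup.mk g⁻¹ : G ⧸ H)).symm
      have hsingle :
          single g c = (single (⟨g * γ, hγ⟩ : H) c : MonoidAlgebra k H) • of k G γ⁻¹ := by
        rw [smul_def, mapDomainRingHom_apply, mapDomain_single, of_apply, single_mul_single,
          mul_one, Subgroup.coe_subtype, mul_inv_cancel_right]
      rw [hsingle]
      exact Submodule.smul_mem _ _ (Submodule.subset_span ⟨_, rfl⟩)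
  have : Module.Finite (MonoidAlgebra k H) (MonoidAlgebra k G) :=
    ⟨Submodule.fg_def.2 ⟨reps, Set.finite_range _, hspan⟩⟩
  have := isNoetherian_of_isNoetherianRing_of_finite (MonoidAlgebra k H) (MonoidAlgebra k G)
  exact isNoetherian_of_tower (MonoidAlgebra k H) this

open scoped IsMulCommutative in
theorem isNoetherianRing_of_isMulCommutative_of_finiteIndex [CommRing k] [IsNoetherianRing k]
    [Group.FG G] (H : Subgroup G) [H.FiniteIndex] [IsMulCommutative H] :
    IsNoetherianRing (MonoidAlgebra k G) :=
  haveI := Algebra.FiniteType.isNoetherianRing k (MonoidAlgebra k H)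
  isNoetherianRing_of_finiteIndex H

noncomputable def opRingEquivOfGroup [Semiring k] :
    (MonoidAlgebra k G)ᵐᵒᵖ ≃+* MonoidAlgebra kᵐᵒᵖ G :=
  MonoidAlgebra.opRingEquiv.trans (mapDomainRingEquiv kᵐᵒᵖ (MulEquiv.inv' G).symm)

end MonoidAlgebra

theorem PresentedGroup.fg {α : Type*} [Finite α] (rels : Set (FreeGroup α)) :
    Group.FG (PresentedGroup rels) :=
  Group.fg_iff.2 ⟨_, closure_range_of rels, Set.finite_range _⟩

theorem SemidirectProduct.isMulCommutative_ker_rightHom_comp {N H G : Type*} [CommGroup N]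
    [Group H] [Group G] {φ : H →* MulAut N} {ρ : G →* N ⋊[φ] H} (hρ : Function.Injective ρ) :
    IsMulCommutative (rightHom.comp ρ).ker := by
  rw [← MonoidHom.comap_ker, ← range_inl_eq_ker_rightHom]
  exact Subgroup.comap_injective_isMulCommutative _ hρ

section YangBaxter

variable {X : Type*} {r : X × X → X × X}

theorem sig_sig_tau_of_involutive (hinv : Function.Involutive r) (x y : X) :
    sig r (sig r x y) (tau r y x) = x :=
  congrArg Prod.fst (hinv (x, y))

theorem sig_comp_sig_of_isBraided (hbr : IsBraided r) (x y : X) :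
    sig r (sig r x y) ∘ sig r (tau r y x) = sig r x ∘ sig r y := by
  funext z
  simpa [r12, r23, sig, tau] using congrArg Prod.fst (congrFun hbr (x, y, z))

variable (r) in
theorem ybι_mul_ybι (x y : X) :
    ybι r x * ybι r y = ybι r (sig r x y) * ybι r (tau r y x) :=
  mul_inv_eq_one.1 (PresentedGroup.one_of_mem (rels := ybRels r) ⟨x, y, rfl⟩)

variable (r) in
def wordProd (w : List X) : YBGroup r := (w.map (ybι r)).prod

@[simp] theorem wordProd_nil : wordProd r [] = 1 := rfl

@[simp] theorem wordProd_cons (x : X) (w : List X) :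
    wordProd r (x :: w) = ybι r x * wordProd r w := List.prod_cons

@[simp] theorem wordProd_append (w v : List X) :
    wordProd r (w ++ v) = wordProd r w * wordProd r v := by
  simp [wordProd]

theorem wordProd_cons_cons (x y : X) (u : List X) :
    wordProd r (x :: y :: u) = wordProd r (sig r x y :: tau r y x :: u) := by
  simp only [wordProd_cons, ← mul_assoc]
  rw [ybι_mul_ybι]

/-- Left Ore condition for the positive words, from surjectivity of `σ_x`:
`x⁻¹ σ_x(b) = b τ_b(x)⁻¹`. -/
theorem exists_inv_ybι_mul_wordProd (hnd : Nondegenerate r) (x : X) (w : List X) :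
    ∃ p q : List X, (ybι r x)⁻¹ * wordProd r w = wordProd r p * (wordProd r q)⁻¹ := by
  induction w generalizing x with
  | nil => exact ⟨[], [x], by simp⟩
  | cons y w ih =>
    obtain ⟨b, rfl⟩ := (hnd.1 x).surjective y
    obtain ⟨p, q, h⟩ := ih (tau r b x)
    refine ⟨b :: p, q, ?_⟩
    have hrel : ybι r (sig r x b) = ybι r x * ybι r b * (ybι r (tau r b x))⁻¹ := by
      rw [ybι_mul_ybι]; group
    calc (ybι r x)⁻¹ * wordProd r (sig r x b :: w)
        = ybι r b * ((ybι r (tau r b x))⁻¹ * wordProd r w) := by rw [wordProd_cons, hrel]; group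
      _ = wordProd r (b :: p) * (wordProd r q)⁻¹ := by rw [h, wordProd_cons, mul_assoc]

theorem exists_eq_wordProd_mul_inv (hnd : Nondegenerate r) (g : YBGroup r) :
    ∃ w v : List X, g = wordProd r w * (wordProd r v)⁻¹ := by
  have hg : g ∈ Subgroup.closure (Set.range (ybι r)) :=
    (PresentedGroup.closure_range_of _).symm ▸ Subgroup.mem_top g
  induction hg using Subgroup.closure_induction_left with
  | one => exact ⟨[], [], by simp⟩
  | mul_left _ hx _ _ ih =>
    obtain ⟨x, rfl⟩ := hx
    obtain ⟨w, v, rfl⟩ := ih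
    exact ⟨x :: w, v, by simp [mul_assoc]⟩
  | inv_mul_cancel _ hx _ _ ih =>
    obtain ⟨x, rfl⟩ := hx
    obtain ⟨w, v, rfl⟩ := ih
    obtain ⟨p, q, h⟩ := exists_inv_ybι_mul_wordProd hnd x w
    exact ⟨p, v ++ q, by rw [← mul_assoc, h, wordProd_append]; group⟩

variable (r) in
/-- The multiset `{x₁, σ_{x₁}(x₂), σ_{x₁}σ_{x₂}(x₃), …}` of the word `x₁ x₂ x₃ ⋯`: as a vector of
multiplicities, the value of the bijective 1-cocycle `G(X,r) → ℤ^X` at the word. -/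
def wordCocycle : List X → Multiset X
  | [] => 0
  | x :: w => x ::ₘ (wordCocycle w).map (sig r x)

theorem wordCocycle_cons_cons (hinv : Function.Involutive r) (hbr : IsBraided r)
    (x y : X) (u : List X) :
    wordCocycle r (sig r x y :: tau r y x :: u) = wordCocycle r (x :: y :: u) := by
  simp only [wordCocycle, Multiset.map_cons, Multiset.map_map, sig_sig_tau_of_involutive hinv,
    sig_comp_sig_of_isBraided hbr]
  exact Multiset.cons_swap _ _ _

theorem exists_wordProd_eq_cons_of_mem_wordCocycle (hinv : Function.Involutive r)
    (hbr : IsBraided r) {w : List X} {y : X} (hy : y ∈ wordCocycle r w) :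
    ∃ u, wordProd r w = wordProd r (y :: u) ∧ wordCocycle r (y :: u) = wordCocycle r w := by
  induction w generalizing y with
  | nil => simp [wordCocycle] at hy
  | cons x w ih =>
    rcases Multiset.mem_cons.1 hy with rfl | hmem
    · exact ⟨w, rfl, rfl⟩
    obtain ⟨z, hz, rfl⟩ := Multiset.mem_map.1 hmem
    obtain ⟨u, hprod, hcoc⟩ := ih hz
    refine ⟨tau r z x :: u, ?_, ?_⟩
    · rw [← wordProd_cons_cons, wordProd_cons, hprod, ← wordProd_cons]
    · rw [wordCocycle_cons_cons hinv hbr, wordCocycle, hcoc, wordCocycle]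

theorem wordProd_eq_of_wordCocycle_eq (hnd : Nondegenerate r) (hinv : Function.Involutive r)
    (hbr : IsBraided r) {w v : List X} (h : wordCocycle r w = wordCocycle r v) :
    wordProd r w = wordProd r v := by
  induction w generalizing v with
  | nil =>
    cases v with
    | nil => rfl
    | cons x v => simp [wordCocycle] at h
  | cons x w ih =>
    have hx : x ∈ wordCocycle r v := h ▸ Multiset.mem_cons_self x _
    obtain ⟨u, hprod, hcoc⟩ := exists_wordProd_eq_cons_of_mem_wordCocycle hinv hbr hx
    have hu : wordCocycle r u = wordCocycle r w :=
      Multiset.map_injective (hnd.1 x).injective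
        ((Multiset.cons_inj_right x).1 (hcoc.trans h.symm))
    rw [hprod, wordProd_cons, wordProd_cons, ih hu.symm]

end YangBaxter

section AffineRepresentation

attribute [local instance] arrowAction arrowMulDistribMulAction

variable (X : Type*)

/-- The affine group `ℤ^X ⋊ Sym(X)`, with `ℤ^X` written multiplicatively. -/
abbrev AffineGroup : Type _ :=
  (X → Multiplicative ℤ) ⋊[MulDistribMulAction.toMulAut (Equiv.Perm X) (X → Multiplicative ℤ)]
    Equiv.Perm X

variable {X} [DecidableEq X]

theorem perm_smul_mulSingle {M : Type*} [One M] (σ : Equiv.Perm X) (x : X) (m : M) :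
    σ • (Pi.mulSingle x m : X → M) = Pi.mulSingle (σ x) m := by
  funext z
  change (Pi.mulSingle x m : X → M) (σ⁻¹ z) = _
  simp only [Pi.mulSingle_apply, Equiv.Perm.inv_eq_iff_eq]

variable {r : X × X → X × X}

noncomputable def sigPerm (hnd : Nondegenerate r) (x : X) : Equiv.Perm X :=
  Equiv.ofBijective (sig r x) (hnd.1 x)

noncomputable def affineGen (hnd : Nondegenerate r) (x : X) : AffineGroup X :=
  ⟨Pi.mulSingle x (Multiplicative.ofAdd 1), sigPerm hnd x⟩

theorem affineGen_mul_affineGen (hnd : Nondegenerate r) (hinv : Function.Involutive r)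
    (hbr : IsBraided r) (x y : X) :
    affineGen hnd x * affineGen hnd y = affineGen hnd (sig r x y) * affineGen hnd (tau r y x) := by
  ext1
  · simp only [SemidirectProduct.mul_left, affineGen, MulDistribMulAction.toMulAut_apply,
      MulDistribMulAction.toMulEquiv_apply, perm_smul_mulSingle, sigPerm, Equiv.ofBijective_apply,
      sig_sig_tau_of_involutive hinv]
    exact mul_comm _ _
  · ext z
    exact congrFun (sig_comp_sig_of_isBraided hbr x y).symm z

noncomputable def affineRep (hnd : Nondegenerate r) (hinv : Function.Involutive r)
    (hbr : IsBraided r) : YBGroup r →* AffineGroup X :=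
  PresentedGroup.toGroup (f := affineGen hnd) <| by
    rintro _ ⟨x, y, rfl⟩
    simp only [map_mul, map_inv, FreeGroup.lift_apply_of]
    exact mul_inv_eq_one.2 (affineGen_mul_affineGen hnd hinv hbr x y)

theorem affineRep_ybι (hnd : Nondegenerate r) (hinv : Function.Involutive r)
    (hbr : IsBraided r) (x : X) : affineRep hnd hinv hbr (ybι r x) = affineGen hnd x :=
  PresentedGroup.toGroup.of _

theorem left_affineRep_wordProd (hnd : Nondegenerate r) (hinv : Function.Involutive r)
    (hbr : IsBraided r) (w : List X) :
    (affineRep hnd hinv hbr (wordProd r w)).left =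
      fun z => Multiplicative.ofAdd ((wordCocycle r w).count z : ℤ) := by
  induction w with
  | nil => funext z; simp [wordCocycle]
  | cons x w ih =>
    funext z
    obtain ⟨z, rfl⟩ := (hnd.1 x).surjective z
    rw [wordProd_cons, map_mul, SemidirectProduct.mul_left, ih, affineRep_ybι]
    change (Pi.mulSingle x (Multiplicative.ofAdd 1) : X → Multiplicative ℤ) (sig r x z) *
      Multiplicative.ofAdd ((wordCocycle r w).count ((sigPerm hnd x)⁻¹ (sig r x z)) : ℤ) = _
    simp only [Pi.mulSingle_apply, sigPerm, Equiv.Perm.coe_inv, Equiv.ofBijective_symm_apply_apply,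
      wordCocycle, Multiset.count_cons, Multiset.count_map_eq_count' _ _ (hnd.1 x).injective,
      Nat.cast_add, Nat.cast_ite, Nat.cast_one, Nat.cast_zero, ofAdd_add]
    split_ifs <;> simp [mul_comm]

theorem affineRep_injective (hnd : Nondegenerate r) (hinv : Function.Involutive r)
    (hbr : IsBraided r) : Function.Injective (affineRep hnd hinv hbr) := by
  refine (injective_iff_map_eq_one _).2 fun g hg => ?_
  obtain ⟨w, v, rfl⟩ := exists_eq_wordProd_mul_inv hnd g
  rw [map_mul, map_inv, mul_inv_eq_one] at hg
  have hleft := congrArg SemidirectProduct.left hg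
  rw [left_affineRep_wordProd, left_affineRep_wordProd] at hleft
  refine mul_inv_eq_one.2 (wordProd_eq_of_wordCocycle_eq hnd hinv hbr (Multiset.ext.2 fun z => ?_))
  exact_mod_cast Multiplicative.ofAdd.injective (congrFun hleft z)

end AffineRepresentation

theorem YBGroup.isNoetherianRing_monoidAlgebra {X : Type*} [Finite X] {r : X × X → X × X}
    (hnd : Nondegenerate r) (hinv : Function.Involutive r) (hbr : IsBraided r)
    (k : Type*) [CommRing k] [IsNoetherianRing k] :
    IsNoetherianRing (MonoidAlgebra k (YBGroup r)) := by
  classical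
  have := PresentedGroup.fg (ybRels r)
  have := SemidirectProduct.isMulCommutative_ker_rightHom_comp (affineRep_injective hnd hinv hbr)
  exact MonoidAlgebra.isNoetherianRing_of_isMulCommutative_of_finiteIndex
    (SemidirectProduct.rightHom.comp (affineRep hnd hinv hbr)).ker

/-- For a finite nondegenerate involutive braided set
`(X,r)` and a field `K`, the group algebra `K[G(X,r)]` is left Noetherian and
right Noetherian. -/
theorem groupAlgebra_noetherian {X : Type*} [Fintype X] (r : X × X → X × X)
    (hnd : Nondegenerate r) (hinv : Function.Involutive r) (hbr : IsBraided r)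
    (K : Type*) [Field K] :
    IsNoetherianRing (MonoidAlgebra K (YBGroup r)) ∧
      IsNoetherianRing (MonoidAlgebra K (YBGroup r))ᵐᵒᵖ :=
  ⟨YBGroup.isNoetherianRing_monoidAlgebra hnd hinv hbr K,
    have := YBGroup.isNoetherianRing_monoidAlgebra hnd hinv hbr Kᵐᵒᵖ
    isNoetherianRing_of_ringEquiv _ MonoidAlgebra.opRingEquivOfGroup.symm⟩
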